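/- Under the hypotheses that r, g are closed convex proper, f is convex differentiable with L-Lipschitz gradient, 0 < α < 3/(2L), and z* satisfies p(z*) = 0 (where p is the PPG residual operator), the iterates z^{k+1} = z^k − αp(z^k) satisfy: ‖z^{k+1} − z*‖² ≤ ‖z^k − z*‖² − α²(1 − 2αL/3)‖p(z^k)‖² − (α/(2L))‖∇f(x^{k+1/2}) − ∇f(x*)‖², where x^{k+1/2} = prox_{αr}(z^k) and x* = prox_{αr}(z*). -/

import Mathlib

open Set Filter Topology
open scoped RealInnerProductSpace

noncomputable section

/-- `f` is closed (lower semicontinuous), convex, and proper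
as an extended-real-valued function. -/
def ClosedConvexProper {E : Type*} [NormedAddCommGroup E] [NormedSpace ℝ E]
    (f : E → EReal) : Prop :=
  LowerSemicontinuous f ∧
  (∀ (a b : ℝ) (x y : E), 0 ≤ a → 0 ≤ b → a + b = 1 →
    f (a • x + b • y) ≤ (a : EReal) * f x + (b : EReal) * f y) ∧
  (∀ x, f x ≠ ⊥) ∧ (∃ x, f x ≠ ⊤)

/-- `p` is a minimizer of the prox objective of the extended-real-valued `f` at `x₀`. -/
def IsProxPt {E : Type*} [NormedAddCommGroup E] [InnerProductSpace ℝ E]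
    (f : E → EReal) (x₀ p : E) : Prop :=
  IsMinOn (fun x => f x + ((1 / 2 * ‖x - x₀‖ ^ 2 : ℝ) : EReal)) Set.univ p

/-- `p` is a minimizer of the prox objective of the real-valued `f` at `x₀`. -/
def IsProxPtR {E : Type*} [NormedAddCommGroup E] [InnerProductSpace ℝ E]
    (f : E → ℝ) (x₀ p : E) : Prop :=
  IsMinOn (fun x => f x + 1 / 2 * ‖x - x₀‖ ^ 2) Set.univ p

/-! The residual `w ↦ w - prox w` of a proximal map is monotone, and the gradient of a convex `f`
with `L`-Lipschitz gradient is `1/L`-cocoercive (Baillon–Haddad). Using the first fact for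
`prox_{αr}` at `z, z*` and for `prox_{αg}` at its two arguments, and adding, bounds the cross term
`⟪z - z*, p(z)⟫` in the expansion of `‖z - α p(z) - z*‖²`; what is left is a gradient term
`⟪∇f(x) - ∇f(x*), p(z)⟫`, which Young's inequality splits against the cocoercivity gain. -/

variable {E : Type*} [NormedAddCommGroup E] [InnerProductSpace ℝ E]

theorem le_of_forall_le_add_mul {a b c : ℝ} (h : ∀ t : ℝ, 0 < t → t ≤ 1 → a ≤ b + t * c) :
    a ≤ b := by
  have hlim : Tendsto (fun t : ℝ => b + t * c) (𝓝[>] 0) (𝓝 b) := by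
    have : Tendsto (fun t : ℝ => b + t * c) (𝓝 0) (𝓝 (b + 0 * c)) :=
      (continuous_const.add (continuous_id.mul continuous_const)).tendsto 0
    simpa using this.mono_left nhdsWithin_le_nhds
  refine ge_of_tendsto hlim ?_
  filter_upwards [Ioc_mem_nhdsGT one_pos] with t ht using h t ht.1 ht.2

section Gradient

variable [CompleteSpace E] {f : E → ℝ} {f' : E → E}

theorem HasGradientAt.hasDerivAt_comp_add_smul {g x v : E} {t : ℝ}
    (h : HasGradientAt f g (x + t • v)) :
    HasDerivAt (fun s : ℝ => f (x + s • v)) ⟪g, v⟫ t := by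
  have hline : HasDerivAt (fun s : ℝ => x + s • v) v t := by
    simpa using ((hasDerivAt_id t).smul_const v).const_add x
  simpa [InnerProductSpace.toDual_apply_apply, Function.comp_def] using
    (hasGradientAt_iff_hasFDerivAt.mp h).comp_hasDerivAt t hline

theorem le_add_inner_add_sq_of_lipschitz_gradient (hf' : ∀ x, HasGradientAt f (f' x) x)
    {L : ℝ} (hLip : ∀ x y, ‖f' x - f' y‖ ≤ L * ‖x - y‖) (x y : E) :
    f y ≤ f x + ⟪f' x, y - x⟫ + L / 2 * ‖y - x‖ ^ 2 := by
  set v := y - x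
  -- The Lipschitz bound makes `φ` antitone on `[0, 1]`; compare `φ 1` with `φ 0`.
  set φ : ℝ → ℝ := fun t => f (x + t • v) - t * ⟪f' x, v⟫ - L / 2 * t ^ 2 * ‖v‖ ^ 2
  have hφ : ∀ t : ℝ, HasDerivAt φ (⟪f' (x + t • v), v⟫ - ⟪f' x, v⟫ - L * t * ‖v‖ ^ 2) t := by
    intro t
    have hquad : HasDerivAt (fun t : ℝ => L / 2 * t ^ 2 * ‖v‖ ^ 2) (L * t * ‖v‖ ^ 2) t :=
      (((hasDerivAt_pow 2 t).const_mul (L / 2)).mul_const (‖v‖ ^ 2)).congr_deriv (by ring)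
    exact (((hf' _).hasDerivAt_comp_add_smul).sub
      ((hasDerivAt_id t).mul_const ⟪f' x, v⟫)).sub hquad |>.congr_deriv (by simp)
  have hφ' : ∀ t ∈ interior (Icc (0 : ℝ) 1), deriv φ t ≤ 0 := by
    intro t ht
    rw [interior_Icc] at ht
    have hdist : ‖x + t • v - x‖ = t * ‖v‖ := by
      rw [add_sub_cancel_left, norm_smul, Real.norm_eq_abs, abs_of_pos ht.1]
    have hlip := mul_le_mul_of_nonneg_right (hdist ▸ hLip (x + t • v) x) (norm_nonneg v)
    have hcs := real_inner_le_norm (f' (x + t • v) - f' x) v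
    rw [(hφ t).deriv, ← inner_sub_left]
    nlinarith
  have hanti : AntitoneOn φ (Icc 0 1) :=
    antitoneOn_of_deriv_nonpos (convex_Icc 0 1)
      (fun t _ => (hφ t).continuousAt.continuousWithinAt)
      (fun t _ => (hφ t).differentiableAt.differentiableWithinAt) hφ'
  have h01 := hanti (left_mem_Icc.mpr zero_le_one) (right_mem_Icc.mpr zero_le_one) zero_le_one
  simp only [φ, v, zero_smul, add_zero, one_smul, add_sub_cancel] at h01
  linarith

theorem ConvexOn.add_inner_le_of_hasGradientAt (hconv : ConvexOn ℝ univ f) {x g : E}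
    (hx : HasGradientAt f g x) (y : E) : f x + ⟪g, y - x⟫ ≤ f y := by
  have hline : ConvexOn ℝ univ (fun t : ℝ => f (x + t • (y - x))) := by
    have hcomp : (fun t : ℝ => f (x + t • (y - x))) = f ∘ AffineMap.lineMap x y := by
      funext t
      simp [AffineMap.lineMap_apply, add_comm]
    rw [hcomp]
    simpa using hconv.comp_affineMap (AffineMap.lineMap x y : ℝ →ᵃ[ℝ] E)
  have hd : HasDerivAt (fun t : ℝ => f (x + t • (y - x))) ⟪g, y - x⟫ 0 :=
    HasGradientAt.hasDerivAt_comp_add_smul (by simpa using hx)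
  have hslope := hline.le_slope_of_hasDerivWithinAt (mem_univ 0) (mem_univ 1) one_pos
    hd.hasDerivWithinAt
  simp only [slope_def_field, one_smul, add_sub_cancel, zero_smul, add_zero, sub_zero, div_one]
    at hslope
  linarith

/-- Descent lemma at `b - (1 / L) • (f' b - f' a)` combined with the gradient inequality at `a`. -/
theorem ConvexOn.add_inner_add_norm_gradient_sub_sq_le (hconv : ConvexOn ℝ univ f)
    (hf' : ∀ x, HasGradientAt f (f' x) x) {L : ℝ} (hL : 0 < L)
    (hLip : ∀ x y, ‖f' x - f' y‖ ≤ L * ‖x - y‖) (a b : E) :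
    f a + ⟪f' a, b - a⟫ + 1 / (2 * L) * ‖f' b - f' a‖ ^ 2 ≤ f b := by
  set δ := f' b - f' a
  set c := b - (1 / L) • δ
  have hdesc := le_add_inner_add_sq_of_lipschitz_gradient hf' hLip b c
  have hgrad := hconv.add_inner_le_of_hasGradientAt (hf' a) c
  have hcb : c - b = -((1 / L) • δ) := by simp [c]
  have hca : c - a = (b - a) - (1 / L) • δ := by simp only [c]; abel
  rw [hcb, inner_neg_right, real_inner_smul_right, norm_neg, norm_smul, Real.norm_eq_abs,
    mul_pow, sq_abs] at hdesc
  rw [hca, inner_sub_right, real_inner_smul_right] at hgrad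
  have hδ : ⟪f' b, δ⟫ - ⟪f' a, δ⟫ = ‖δ‖ ^ 2 := by
    rw [← inner_sub_left, real_inner_self_eq_norm_sq]
  have hcoef : L / 2 * ((1 / L) ^ 2 * ‖δ‖ ^ 2) = (1 / L - 1 / (2 * L)) * ‖δ‖ ^ 2 := by
    field_simp; ring
  have hδ' : 1 / L * ⟪f' b, δ⟫ - 1 / L * ⟪f' a, δ⟫ = 1 / L * ‖δ‖ ^ 2 := by rw [← mul_sub, hδ]
  rw [hcoef] at hdesc
  linarith

theorem ConvexOn.norm_gradient_sub_sq_le_mul_inner (hconv : ConvexOn ℝ univ f)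
    (hf' : ∀ x, HasGradientAt f (f' x) x) {L : ℝ} (hL : 0 < L)
    (hLip : ∀ x y, ‖f' x - f' y‖ ≤ L * ‖x - y‖) (x y : E) :
    ‖f' x - f' y‖ ^ 2 ≤ L * ⟪f' x - f' y, x - y⟫ := by
  have hxy := hconv.add_inner_add_norm_gradient_sub_sq_le hf' hL hLip x y
  have hyx := hconv.add_inner_add_norm_gradient_sub_sq_le hf' hL hLip y x
  rw [norm_sub_rev] at hxy
  have hinner : ⟪f' x, y - x⟫ + ⟪f' y, x - y⟫ = -⟪f' x - f' y, x - y⟫ := by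
    simp only [inner_sub_left, inner_sub_right]
    ring
  have hsum : 1 / L * ‖f' x - f' y‖ ^ 2 ≤ ⟪f' x - f' y, x - y⟫ := by
    have : 1 / L = 1 / (2 * L) + 1 / (2 * L) := by field_simp; ring
    rw [this]
    linarith
  calc ‖f' x - f' y‖ ^ 2 = L * (1 / L * ‖f' x - f' y‖ ^ 2) := by field_simp
    _ ≤ L * ⟪f' x - f' y, x - y⟫ := mul_le_mul_of_nonneg_left hsum hL.le

end Gradient

namespace IsProxPt

variable {α : ℝ} {r : E → EReal} {w p : E}

theorem objective_le (h : IsProxPt (fun x => (α : EReal) * r x) w p) (x : E) :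
    (α : EReal) * r p + ((1 / 2 * ‖p - w‖ ^ 2 : ℝ) : EReal) ≤
      (α : EReal) * r x + ((1 / 2 * ‖x - w‖ ^ 2 : ℝ) : EReal) :=
  isMinOn_iff.mp h x (mem_univ x)

theorem le_of_le_coe (hα : 0 ≤ α) (h : IsProxPt (fun x => (α : EReal) * r x) w p) {Rp : ℝ}
    (hp : r p = Rp) {x : E} {R : ℝ} (hx : r x ≤ R) :
    α * Rp + 1 / 2 * ‖p - w‖ ^ 2 ≤ α * R + 1 / 2 * ‖x - w‖ ^ 2 := by
  have hmin := h.objective_le x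
  have hmul : (α : EReal) * r x ≤ (α : EReal) * R :=
    mul_le_mul_of_nonneg_left hx (EReal.coe_nonneg.mpr hα)
  rw [hp] at hmin
  exact_mod_cast hmin.trans (add_le_add_left hmul _)

theorem ne_top (hα : 0 < α) (hr : ClosedConvexProper r)
    (h : IsProxPt (fun x => (α : EReal) * r x) w p) : r p ≠ ⊤ := by
  obtain ⟨x₀, hx₀⟩ := hr.2.2.2
  intro htop
  have hmin := h.objective_le x₀
  rw [htop, EReal.mul_top_of_pos (EReal.coe_pos.mpr hα), EReal.top_add_coe,
    ← EReal.coe_toReal hx₀ (hr.2.2.1 x₀), ← EReal.coe_mul, ← EReal.coe_add] at hmin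
  exact EReal.coe_ne_top _ (top_le_iff.mp hmin)

/-- Compare the prox objective at `p` with its value at `p + t • (q - p)` and let `t → 0`. -/
theorem mul_sub_le_inner (hα : 0 < α) (hr : ClosedConvexProper r)
    (h : IsProxPt (fun x => (α : EReal) * r x) w p) {q : E} {Rp Rq : ℝ}
    (hp : r p = Rp) (hq : r q = Rq) :
    α * Rp - α * Rq ≤ ⟪p - w, q - p⟫ := by
  refine le_of_forall_le_add_mul (c := 1 / 2 * ‖q - p‖ ^ 2) fun t ht ht1 => ?_
  have hseg : (1 - t) • p + t • q = p + t • (q - p) := by module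
  have hconv : r (p + t • (q - p)) ≤ (((1 - t) * Rp + t * Rq : ℝ) : EReal) := by
    have := hr.2.1 (1 - t) t p q (by linarith) ht.le (by ring)
    rwa [hseg, hp, hq, ← EReal.coe_mul, ← EReal.coe_mul, ← EReal.coe_add] at this
  have hobj := h.le_of_le_coe hα.le hp hconv
  have hexp : ‖p + t • (q - p) - w‖ ^ 2 =
      ‖p - w‖ ^ 2 + 2 * (t * ⟪p - w, q - p⟫) + t ^ 2 * ‖q - p‖ ^ 2 := by
    rw [show p + t • (q - p) - w = (p - w) + t • (q - p) by abel, norm_add_sq_real,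
      real_inner_smul_right, norm_smul, Real.norm_eq_abs, mul_pow, sq_abs]
  rw [hexp] at hobj
  have hdiv : t * (α * Rp - α * Rq) ≤ t * (⟪p - w, q - p⟫ + t * (1 / 2 * ‖q - p‖ ^ 2)) := by
    linarith
  exact le_of_mul_le_mul_left hdiv ht

theorem inner_sub_sub_nonneg (hα : 0 < α) (hr : ClosedConvexProper r)
    {w' p' : E} (h : IsProxPt (fun x => (α : EReal) * r x) w p)
    (h' : IsProxPt (fun x => (α : EReal) * r x) w' p') :
    0 ≤ ⟪(w - p) - (w' - p'), p - p'⟫ := by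
  have hp := (EReal.coe_toReal (h.ne_top hα hr) (hr.2.2.1 p)).symm
  have hp' := (EReal.coe_toReal (h'.ne_top hα hr) (hr.2.2.1 p')).symm
  have h₁ := h.mul_sub_le_inner hα hr hp hp'
  have h₂ := h'.mul_sub_le_inner hα hr hp' hp
  have hsum : ⟪(w - p) - (w' - p'), p - p'⟫ = ⟪p - w, p' - p⟫ + ⟪p' - w', p - p'⟫ := by
    simp only [inner_sub_left, inner_sub_right]
    ring
  linarith

end IsProxPt

theorem young_inner_le {α L : ℝ} (hα : 0 < α) (hL : 0 < L) (D Q : E) :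
    2 * α ^ 2 * ⟪D, Q⟫ ≤ 3 * α / (2 * L) * ‖D‖ ^ 2 + 2 * α ^ 3 * L / 3 * ‖Q‖ ^ 2 := by
  have hsq : 0 ≤ α / (6 * L) * (3 * ‖D‖ - 2 * α * L * ‖Q‖) ^ 2 := by positivity
  have hexp : α / (6 * L) * (3 * ‖D‖ - 2 * α * L * ‖Q‖) ^ 2 =
      3 * α / (2 * L) * ‖D‖ ^ 2 + 2 * α ^ 3 * L / 3 * ‖Q‖ ^ 2 - 2 * α ^ 2 * (‖D‖ * ‖Q‖) := by
    field_simp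
    ring
  have hcs := mul_le_mul_of_nonneg_left (real_inner_le_norm D Q) (by positivity : 0 ≤ 2 * α ^ 2)
  linarith

/-- `x`, `x'` are the two proximal points of the step `z ↦ z - α • Q`, and `xs` the proximal point
of `zs`. -/
theorem norm_ppg_step_sub_sq_le {α L : ℝ} (hα : 0 < α) (hL : 0 < L)
    {z zs x xs x' Q gx gxs : E} (hQ : α • Q = x - x')
    (hr : 0 ≤ ⟪(z - x) - (zs - xs), x - xs⟫)
    (hg : 0 ≤ ⟪((2 : ℝ) • x - z - α • gx - x') - ((2 : ℝ) • xs - zs - α • gxs - xs), x' - xs⟫)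
    (hcoco : ‖gx - gxs‖ ^ 2 ≤ L * ⟪gx - gxs, x - xs⟫) :
    ‖z - α • Q - zs‖ ^ 2 ≤
      ‖z - zs‖ ^ 2 - α ^ 2 * (1 - 2 * α * L / 3) * ‖Q‖ ^ 2 - α / (2 * L) * ‖gx - gxs‖ ^ 2 := by
  obtain rfl : x' = x - α • Q := by rw [hQ]; abel
  set W := z - zs
  set U := x - xs
  set D := gx - gxs
  have hr' : 0 ≤ ⟪W, U⟫ - ‖U‖ ^ 2 := by
    rw [← real_inner_self_eq_norm_sq, ← inner_sub_left]
    convert hr using 2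
    simp only [W, U]
    abel
  have hg' : 0 ≤ ‖U‖ ^ 2 - α ^ 2 * ‖Q‖ ^ 2 - ⟪W, U⟫ + α * ⟪W, Q⟫ - α * ⟪D, U⟫ + α ^ 2 * ⟪D, Q⟫ := by
    have hvec : ((2 : ℝ) • x - z - α • gx - (x - α • Q)) - ((2 : ℝ) • xs - zs - α • gxs - xs) =
        U + α • Q - W - α • D := by
      simp only [W, U, D]
      module
    rw [hvec, show x - α • Q - xs = U - α • Q by simp only [U]; abel] at hg
    convert hg using 1
    simp only [inner_sub_left, inner_sub_right, inner_add_left, real_inner_smul_left,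
      real_inner_smul_right, real_inner_self_eq_norm_sq, real_inner_comm Q U,
      real_inner_comm U W, real_inner_comm Q D, norm_smul, Real.norm_eq_abs, mul_pow, sq_abs]
    ring
  have hcoco' : α / L * ‖D‖ ^ 2 ≤ α * ⟪D, U⟫ := by
    rw [div_mul_eq_mul_div, div_le_iff₀ hL]
    nlinarith
  have hyoung := young_inner_le hα hL D Q
  calc ‖z - α • Q - zs‖ ^ 2 = ‖W‖ ^ 2 - 2 * (α * ⟪W, Q⟫) + α ^ 2 * ‖Q‖ ^ 2 := by
        rw [show z - α • Q - zs = W - α • Q by simp only [W]; abel, norm_sub_sq_real, real_inner_smul_right,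
          norm_smul, Real.norm_eq_abs, mul_pow, sq_abs]
    _ ≤ ‖W‖ ^ 2 - α ^ 2 * ‖Q‖ ^ 2 - 2 * (α / L * ‖D‖ ^ 2) +
          (3 * α / (2 * L) * ‖D‖ ^ 2 + 2 * α ^ 3 * L / 3 * ‖Q‖ ^ 2) := by
        linarith
    _ = ‖W‖ ^ 2 - α ^ 2 * (1 - 2 * α * L / 3) * ‖Q‖ ^ 2 - α / (2 * L) * ‖D‖ ^ 2 := by
        field_simp
        ring

theorem stmt12_general
    {d : ℕ} (α : ℝ) (hα : 0 < α)
    (r g : EuclideanSpace ℝ (Fin d) → EReal)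
    (hr : ClosedConvexProper r) (hg : ClosedConvexProper g)
    (f : EuclideanSpace ℝ (Fin d) → ℝ) (hfconv : ConvexOn ℝ Set.univ f)
    (f' : EuclideanSpace ℝ (Fin d) → EuclideanSpace ℝ (Fin d))
    (hf' : ∀ x, HasGradientAt f (f' x) x)
    (Pr Pg : EuclideanSpace ℝ (Fin d) → EuclideanSpace ℝ (Fin d))
    (hPr : ∀ w, IsProxPt (fun x => (α : EReal) * r x) w (Pr w))
    (hPg : ∀ w, IsProxPt (fun x => (α : EReal) * g x) w (Pg w))
    (P : EuclideanSpace ℝ (Fin d) → EuclideanSpace ℝ (Fin d))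
    (hP : ∀ z, P z = α⁻¹ • (Pr z - Pg ((2 : ℝ) • Pr z - z - α • f' (Pr z))))
    (L : ℝ) (hL : 0 < L)
    (hLip : ∀ x y, ‖f' x - f' y‖ ≤ L * ‖x - y‖)
    (z : ℕ → EuclideanSpace ℝ (Fin d))
    (hiter : ∀ k, z (k + 1) = z k - α • P (z k))
    (zs : EuclideanSpace ℝ (Fin d)) (hzs : P zs = 0) :
    ∀ k, ‖z (k + 1) - zs‖ ^ 2 ≤
      ‖z k - zs‖ ^ 2 - α ^ 2 * (1 - 2 * α * L / 3) * ‖P (z k)‖ ^ 2 -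
        α / (2 * L) * ‖f' (Pr (z k)) - f' (Pr zs)‖ ^ 2 := by
  intro k
  have hstep : α • P (z k) = Pr (z k) - Pg ((2 : ℝ) • Pr (z k) - z k - α • f' (Pr (z k))) := by
    rw [hP, smul_inv_smul₀ hα.ne']
  have hfix : Pg ((2 : ℝ) • Pr zs - zs - α • f' (Pr zs)) = Pr zs := by
    have h0 := hP zs
    rw [hzs, eq_comm, smul_eq_zero, sub_eq_zero] at h0
    exact (h0.resolve_left (inv_ne_zero hα.ne')).symm
  have hPg_fix := hPg ((2 : ℝ) • Pr zs - zs - α • f' (Pr zs))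
  rw [hfix] at hPg_fix
  rw [hiter k]
  exact norm_ppg_step_sub_sq_le hα hL hstep
    ((hPr (z k)).inner_sub_sub_nonneg hα hr (hPr zs))
    ((hPg _).inner_sub_sub_nonneg hα hg hPg_fix)
    (hfconv.norm_gradient_sub_sq_le_mul_inner hf' hL hLip _ _)

/-- Fejér-monotone descent inequality for the PPG iteration. -/
theorem stmt12
    {d : ℕ} (α : ℝ) (hα : 0 < α)
    (r g : EuclideanSpace ℝ (Fin d) → EReal)
    (hr : ClosedConvexProper r) (hg : ClosedConvexProper g)
    (f : EuclideanSpace ℝ (Fin d) → ℝ) (hfconv : ConvexOn ℝ Set.univ f)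
    (f' : EuclideanSpace ℝ (Fin d) → EuclideanSpace ℝ (Fin d))
    (hf' : ∀ x, HasGradientAt f (f' x) x)
    (Pr Pg : EuclideanSpace ℝ (Fin d) → EuclideanSpace ℝ (Fin d))
    (hPr : ∀ w, IsProxPt (fun x => (α : EReal) * r x) w (Pr w))
    (hPg : ∀ w, IsProxPt (fun x => (α : EReal) * g x) w (Pg w))
    (P : EuclideanSpace ℝ (Fin d) → EuclideanSpace ℝ (Fin d))
    (hP : ∀ z, P z = α⁻¹ • (Pr z - Pg ((2 : ℝ) • Pr z - z - α • f' (Pr z))))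
    (L : ℝ) (hL : 0 < L)
    (hLip : ∀ x y, ‖f' x - f' y‖ ≤ L * ‖x - y‖)
    (hαL : α < 3 / (2 * L))
    (z : ℕ → EuclideanSpace ℝ (Fin d))
    (hiter : ∀ k, z (k + 1) = z k - α • P (z k))
    (zs : EuclideanSpace ℝ (Fin d)) (hzs : P zs = 0) :
    ∀ k, ‖z (k + 1) - zs‖ ^ 2 ≤
      ‖z k - zs‖ ^ 2 - α ^ 2 * (1 - 2 * α * L / 3) * ‖P (z k)‖ ^ 2 -
        α / (2 * L) * ‖f' (Pr (z k)) - f' (Pr zs)‖ ^ 2 :=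
  stmt12_general α hα r g hr hg f hfconv f' hf' Pr Pg hPr hPg P hP L hL hLip z hiter zs hzs
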